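/- Let n ≥ 1 and let a, b, c, d, e, f ∈ {1,…,n} be pairwise distinct. Then, as words over 𝒢_n, H_{c,e} H_{d,f} H_{e,f} H_{d,f} H_{c,e} H_{a,c} H_{b,d} H_{a,b} H_{b,d} H_{a,c} H_{a,e} H_{b,f} H_{a,b} H_{b,f} H_{a,e} ≈ H_{a,c} H_{b,d} H_{a,b} H_{b,d} H_{a,c}. -/

import Mathlib

open Matrix

noncomputable section

/-- `Z_a`: identity matrix except entry `(a,a)` is `-1`. -/
def Zmat (n : ℕ) (a : Fin n) : Matrix (Fin n) (Fin n) ℝ :=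
  fun i j => if i = j then (if i = a then -1 else 1) else 0

/-- `X_{b,c}`: the permutation matrix exchanging the `b`-th and `c`-th
standard basis vectors. -/
def Xmat (n : ℕ) (b c : Fin n) : Matrix (Fin n) (Fin n) ℝ :=
  fun i j => if j = Equiv.swap b c i then 1 else 0

/-- `H_{b,c}`: identity except entries `(b,b), (b,c), (c,b)` equal `1/√2`
and entry `(c,c)` equals `-1/√2`. -/
def Hmat (n : ℕ) (b c : Fin n) : Matrix (Fin n) (Fin n) ℝ :=
  fun i j =>
    if i = b ∧ j = b then 1 / Real.sqrt 2
    else if i = b ∧ j = c then 1 / Real.sqrt 2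
    else if i = c ∧ j = b then 1 / Real.sqrt 2
    else if i = c ∧ j = c then -(1 / Real.sqrt 2)
    else if i = j then 1 else 0

/-- Generators of `𝒢_n`. -/
inductive Gen (n : ℕ) : Type
  | Z : Fin n → Gen n
  | X : (b c : Fin n) → b ≠ c → Gen n
  | H : (b c : Fin n) → b ≠ c → Gen n

/-- Semantics of a generator. -/
def gsem {n : ℕ} : Gen n → Matrix (Fin n) (Fin n) ℝ
  | Gen.Z a => Zmat n a
  | Gen.X b c _ => Xmat n b c
  | Gen.H b c _ => Hmat n b c

/-- Semantics of a word (rightmost generator acts first). -/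
def wsem {n : ℕ} : List (Gen n) → Matrix (Fin n) (Fin n) ℝ
  | [] => 1
  | g :: w => gsem g * wsem w

/-- The smallest congruence `≈` on words over `𝒢_n` containing the relations
(a1)-(d4), (e1), (e2) of the paper. -/
inductive WRel (n : ℕ) : List (Gen n) → List (Gen n) → Prop
  | rel_zz (a : Fin n) : WRel n [Gen.Z a, Gen.Z a] []
  | rel_xx (a b : Fin n) (hab : a ≠ b) : WRel n [Gen.X a b hab, Gen.X a b hab] []
  | rel_hh (a b : Fin n) (hab : a ≠ b) : WRel n [Gen.H a b hab, Gen.H a b hab] []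
  | rel_zz_comm (a b : Fin n) (hab : a ≠ b) : WRel n [Gen.Z a, Gen.Z b] [Gen.Z b, Gen.Z a]
  | rel_zx_comm (a b c : Fin n) (hab : a ≠ b) (hac : a ≠ c) (hbc : b ≠ c) :
      WRel n [Gen.Z a, Gen.X b c hbc] [Gen.X b c hbc, Gen.Z a]
  | rel_xx_comm (a b c d : Fin n) (hab : a ≠ b) (hac : a ≠ c) (had : a ≠ d)
      (hbc : b ≠ c) (hbd : b ≠ d) (hcd : c ≠ d) :
      WRel n [Gen.X a b hab, Gen.X c d hcd] [Gen.X c d hcd, Gen.X a b hab]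
  | rel_zh_comm (a b c : Fin n) (hab : a ≠ b) (hac : a ≠ c) (hbc : b ≠ c) :
      WRel n [Gen.Z a, Gen.H b c hbc] [Gen.H b c hbc, Gen.Z a]
  | rel_xh_comm (a b c d : Fin n) (hab : a ≠ b) (hac : a ≠ c) (had : a ≠ d)
      (hbc : b ≠ c) (hbd : b ≠ d) (hcd : c ≠ d) :
      WRel n [Gen.X a b hab, Gen.H c d hcd] [Gen.H c d hcd, Gen.X a b hab]
  | rel_hh_comm (a b c d : Fin n) (hab : a ≠ b) (hac : a ≠ c) (had : a ≠ d)
      (hbc : b ≠ c) (hbd : b ≠ d) (hcd : c ≠ d) :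
      WRel n [Gen.H a b hab, Gen.H c d hcd] [Gen.H c d hcd, Gen.H a b hab]
  | rel_zx (a b : Fin n) (hab : a ≠ b) :
      WRel n [Gen.Z a, Gen.X a b hab] [Gen.X a b hab, Gen.Z b]
  | rel_xc2 (a b c : Fin n) (hab : a ≠ b) (hac : a ≠ c) (hbc : b ≠ c) :
      WRel n [Gen.X b c hbc, Gen.X a b hab] [Gen.X a b hab, Gen.X a c hac]
  | rel_xc3 (a b c : Fin n) (hab : a ≠ b) (hac : a ≠ c) (hbc : b ≠ c) :
      WRel n [Gen.X a c hac, Gen.X b c hbc] [Gen.X b c hbc, Gen.X a b hab]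
  | rel_hx4 (a b c : Fin n) (hab : a ≠ b) (hac : a ≠ c) (hbc : b ≠ c) :
      WRel n [Gen.H b c hbc, Gen.X a b hab] [Gen.X a b hab, Gen.H a c hac]
  | rel_hx5 (a b c : Fin n) (hab : a ≠ b) (hac : a ≠ c) (hbc : b ≠ c) :
      WRel n [Gen.H a c hac, Gen.X b c hbc] [Gen.X b c hbc, Gen.H a b hab]
  | rel_zzh (a b : Fin n) (hab : a ≠ b) :
      WRel n [Gen.Z a, Gen.Z b, Gen.H a b hab] [Gen.H a b hab, Gen.Z a, Gen.Z b]
  | rel_zh (a b : Fin n) (hab : a ≠ b) :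
      WRel n [Gen.Z b, Gen.H a b hab] [Gen.H a b hab, Gen.X a b hab]
  | rel_d3 (a b c d : Fin n) (hab : a ≠ b) (hac : a ≠ c) (had : a ≠ d)
      (hbc : b ≠ c) (hbd : b ≠ d) (hcd : c ≠ d) :
      WRel n
        ([Gen.H c d hcd, Gen.H a c hac, Gen.H b d hbd] ++
         [Gen.H c d hcd, Gen.H a c hac, Gen.H b d hbd] ++
         [Gen.H c d hcd, Gen.H a c hac, Gen.H b d hbd] ++
         [Gen.H c d hcd, Gen.H a c hac, Gen.H b d hbd])
        [Gen.H a b hab, Gen.H c d hcd]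
  | rel_d4 (a b c d e f : Fin n) (hab : a ≠ b) (hac : a ≠ c) (had : a ≠ d)
      (hae : a ≠ e) (haf : a ≠ f) (hbc : b ≠ c) (hbd : b ≠ d) (hbe : b ≠ e)
      (hbf : b ≠ f) (hcd : c ≠ d) (hce : c ≠ e) (hcf : c ≠ f) (hde : d ≠ e)
      (hdf : d ≠ f) (hef : e ≠ f) :
      WRel n
        ([Gen.H a c hac, Gen.H b d hbd, Gen.H a b hab, Gen.H a c hac,
          Gen.H b d hbd, Gen.X c e hce, Gen.X d f hdf] ++
         [Gen.H a c hac, Gen.H b d hbd, Gen.H a b hab, Gen.H a c hac,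
          Gen.H b d hbd, Gen.X c e hce, Gen.X d f hdf] ++
         [Gen.H a c hac, Gen.H b d hbd, Gen.H a b hab, Gen.H a c hac,
          Gen.H b d hbd, Gen.X c e hce, Gen.X d f hdf])
        [Gen.H c e hce, Gen.H d f hdf, Gen.H e f hef, Gen.H c e hce,
         Gen.H d f hdf, Gen.X c e hce, Gen.X d f hdf]
  | rel_x_swap (b c : Fin n) (hbc : b ≠ c) :
      WRel n [Gen.X c b (Ne.symm hbc)] [Gen.X b c hbc]
  | rel_h_swap (b c : Fin n) (hbc : b ≠ c) :
      WRel n [Gen.H c b (Ne.symm hbc)] [Gen.X b c hbc, Gen.H b c hbc, Gen.X b c hbc]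
  | refl (w : List (Gen n)) : WRel n w w
  | symm {u v : List (Gen n)} : WRel n u v → WRel n v u
  | trans {u v w : List (Gen n)} : WRel n u v → WRel n v w → WRel n u w
  | append_left (w : List (Gen n)) {u v : List (Gen n)} :
      WRel n u v → WRel n (w ++ u) (w ++ v)
  | append_right (w : List (Gen n)) {u v : List (Gen n)} :
      WRel n u v → WRel n (u ++ w) (v ++ w)

/-- Membership in the ring `ℤ[√2] ⊆ ℝ`. -/
def inZsqrt2 (x : ℝ) : Prop := ∃ a b : ℤ, x = (a : ℝ) + (b : ℝ) * Real.sqrt 2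

/-- Membership in the ring `ℤ[1/√2] ⊆ ℝ`. -/
def inZinvsqrt2 (x : ℝ) : Prop := ∃ k : ℕ, inZsqrt2 (Real.sqrt 2 ^ k * x)

/-- `u ≡ v (mod 2)`, i.e. `(u - v)/2 ∈ ℤ[√2]`. -/
def cong2 (u v : ℝ) : Prop := inZsqrt2 ((u - v) / 2)

/-- Least denominator exponent of a scalar. -/
def lde (x : ℝ) : ℕ := sInf {k : ℕ | inZsqrt2 (Real.sqrt 2 ^ k * x)}

/-- Least denominator exponent of a vector. -/
def ldeVec {m : ℕ} (v : Fin m → ℝ) : ℕ :=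
  sInf {k : ℕ | ∀ i, inZsqrt2 (Real.sqrt 2 ^ k * v i)}

/-- The largest (1-based) index `j` such that the `j`-th column of `M` differs
from the `j`-th standard basis vector (`0` if `M` is the identity). -/
def levelJ {n : ℕ} (M : Matrix (Fin n) (Fin n) ℝ) : ℕ :=
  sSup {m : ℕ | ∃ i : Fin n, m = (i : ℕ) + 1 ∧
    ∃ r : Fin n, M r i ≠ (if r = i then (1 : ℝ) else 0)}

/-- The `levelJ M`-th column of `M` (junk if `n = 0`). -/
def levelCol {n : ℕ} (M : Matrix (Fin n) (Fin n) ℝ) : Fin n → ℝ :=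
  fun r => if h : levelJ M - 1 < n then M r ⟨levelJ M - 1, h⟩ else 0

/-- The level `(j, k, l)` of a matrix, as an element of `ℕ ×ₗ (ℕ ×ₗ ℕ)`
(lexicographic order). -/
def level {n : ℕ} (M : Matrix (Fin n) (Fin n) ℝ) : ℕ ×ₗ (ℕ ×ₗ ℕ) :=
  if levelJ M = 0 then toLex (0, toLex (0, 0))
  else if ldeVec (levelCol M) = 0 then toLex (levelJ M, toLex (0, 0))
  else
    toLex (levelJ M, toLex (ldeVec (levelCol M),
      Nat.card {i : Fin n //
        cong2 (Real.sqrt 2 ^ ldeVec (levelCol M) * levelCol M i) 1 ∨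
        cong2 (Real.sqrt 2 ^ ldeVec (levelCol M) * levelCol M i) (1 + Real.sqrt 2)}))

/-- The level of the sequence of intermediate states obtained by applying the
generators of a word (rightmost first) to a state `s`: the maximum of the
levels of all intermediate states. -/
def seqLevel {n : ℕ} : List (Gen n) → Matrix (Fin n) (Fin n) ℝ → ℕ ×ₗ (ℕ ×ₗ ℕ)
  | [], s => level s
  | g :: w, s => max (level (gsem g * (wsem w * s))) (seqLevel w s)

/-- The basic generators `𝒢'_n = {X_{1,x} : 2 ≤ x ≤ n} ∪ {Z_1, H_{1,2}}`
(written with 1-based indices). -/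
def Gen.isBasic {n : ℕ} : Gen n → Prop
  | Gen.Z a => (a : ℕ) = 0
  | Gen.X b _ _ => (b : ℕ) = 0
  | Gen.H b c _ => (b : ℕ) = 0 ∧ (c : ℕ) = 1

/-- A generator with ordered indices (`b < c` for `X_{b,c}` and `H_{b,c}`). -/
def Gen.ordered {n : ℕ} : Gen n → Prop
  | Gen.Z _ => True
  | Gen.X b c _ => b < c
  | Gen.H b c _ => b < c

/-! Put `A = H_{a,c} H_{b,d} H_{a,b} H_{a,c} H_{b,d}`, `B = H_{a,e} H_{b,f} H_{a,b} H_{a,e} H_{b,f}`,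
`C = H_{c,e} H_{d,f} H_{e,f} H_{c,e} H_{d,f}` and `X = X_{c,e} X_{d,f}`. Conjugation by the
involution `X` renames `c ↦ e`, `d ↦ f`, so `A X ≈ X B`, and relation (d4), `(A X)³ ≈ C X`,
collapses to `A B A ≈ C`. As `A` and `B` are involutions, `C A B ≈ A`, which is the claim up to
commuting disjoint generators. The computation takes place in the monoid of words modulo `≈`. -/

section Monoid

variable {M : Type*} [Monoid M]

theorem mul_mul_self_of_commute {p q : M} (hpq : Commute p q) (hp : p * p = 1) (hq : q * q = 1) :
    p * q * (p * q) = 1 := by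
  rw [hpq.symm.mul_mul_mul_comm, hp, hq, one_mul]

theorem mul_mul_mul_self_of_mul_self {p q : M} (hp : p * p = 1) (hq : q * q = 1) :
    p * q * p * (p * q * p) = 1 := by
  calc p * q * p * (p * q * p) = p * q * (p * p) * q * p := by simp only [mul_assoc]
    _ = 1 := by rw [hp, mul_one, mul_assoc p q q, hq, mul_one, hp]

theorem mul_mul_mul_swap_of_commute {x y z : M} (hyx : Commute y x) :
    x * y * z * y * x = x * y * z * x * y := by
  rw [mul_assoc _ y x, hyx.eq, ← mul_assoc]

theorem mul_mul_eq_of_pow_three_eq {a b c x : M} (hx : x * x = 1) (hax : SemiconjBy x b a)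
    (h : (a * x) ^ 3 = c * x) : a * b * a = c := by
  have hxax : x * a * x = b := by rw [mul_assoc, ← hax.eq, ← mul_assoc, hx, one_mul]
  calc a * b * a = a * (x * a * x) * a * x * x := by rw [hxax, mul_assoc _ x x, hx, mul_one]
    _ = (a * x) ^ 3 * x := by simp only [pow_succ, pow_zero, one_mul, mul_assoc]
    _ = c := by rw [h, mul_assoc, hx, mul_one]

theorem mul_mul_eq_of_mul_mul_eq {a b c : M} (h : a * b * a = c) (ha : a * a = 1)
    (hb : b * b = 1) : c * a * b = a := by
  rw [← h, mul_assoc (a * b) a a, ha, mul_one, mul_assoc, hb, mul_one]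

end Monoid

theorem WRel.append {n : ℕ} {u u' v v' : List (Gen n)} (hu : WRel n u u') (hv : WRel n v v') :
    WRel n (u ++ v) (u' ++ v') :=
  (append_right v hu).trans (append_left u' hv)

def wordCon (n : ℕ) : Con (FreeMonoid (Gen n)) where
  r u v := WRel n u.toList v.toList
  iseqv := ⟨fun u => WRel.refl u.toList, WRel.symm, WRel.trans⟩
  mul' := WRel.append

def wordClass {n : ℕ} (u : List (Gen n)) : (wordCon n).Quotient :=
  (FreeMonoid.ofList u : FreeMonoid (Gen n))

def genClass {n : ℕ} (g : Gen n) : (wordCon n).Quotient := (FreeMonoid.of g : FreeMonoid (Gen n))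

section WordClass

variable {n : ℕ}

theorem wordClass_eq_iff {u v : List (Gen n)} : wordClass u = wordClass v ↔ WRel n u v :=
  Con.eq _

@[simp]
theorem wordClass_nil : wordClass ([] : List (Gen n)) = 1 :=
  Con.coe_one

@[simp]
theorem wordClass_cons (g : Gen n) (u : List (Gen n)) :
    wordClass (g :: u) = genClass g * wordClass u :=
  Con.coe_mul (FreeMonoid.of g) (FreeMonoid.ofList u)

theorem genClass_mul_genClass {g₁ g₂ g₃ g₄ : Gen n} (h : WRel n [g₁, g₂] [g₃, g₄]) :
    genClass g₁ * genClass g₂ = genClass g₃ * genClass g₄ := by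
  simpa using wordClass_eq_iff.2 h

theorem genClass_mul_self {g : Gen n} (h : WRel n [g, g] []) : genClass g * genClass g = 1 := by
  simpa using wordClass_eq_iff.2 h

theorem genClass_H_mul_self {p q : Fin n} (hpq : p ≠ q) :
    genClass (Gen.H p q hpq) * genClass (Gen.H p q hpq) = 1 :=
  genClass_mul_self (WRel.rel_hh p q hpq)

theorem genClass_X_mul_self {p q : Fin n} (hpq : p ≠ q) :
    genClass (Gen.X p q hpq) * genClass (Gen.X p q hpq) = 1 :=
  genClass_mul_self (WRel.rel_xx p q hpq)

theorem genClass_X_swap {p q : Fin n} (hpq : p ≠ q) :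
    genClass (Gen.X q p hpq.symm) = genClass (Gen.X p q hpq) := by
  simpa using wordClass_eq_iff.2 (WRel.rel_x_swap p q hpq)

theorem commute_genClass_H_H {p q r s : Fin n} (hpq : p ≠ q) (hrs : r ≠ s) (hpr : p ≠ r)
    (hps : p ≠ s) (hqr : q ≠ r) (hqs : q ≠ s) :
    Commute (genClass (Gen.H p q hpq)) (genClass (Gen.H r s hrs)) :=
  genClass_mul_genClass (WRel.rel_hh_comm p q r s hpq hpr hps hqr hqs hrs)

theorem commute_genClass_X_X {p q r s : Fin n} (hpq : p ≠ q) (hrs : r ≠ s) (hpr : p ≠ r)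
    (hps : p ≠ s) (hqr : q ≠ r) (hqs : q ≠ s) :
    Commute (genClass (Gen.X p q hpq)) (genClass (Gen.X r s hrs)) :=
  genClass_mul_genClass (WRel.rel_xx_comm p q r s hpq hpr hps hqr hqs hrs)

theorem commute_genClass_X_H {p q r s : Fin n} (hpq : p ≠ q) (hrs : r ≠ s) (hpr : p ≠ r)
    (hps : p ≠ s) (hqr : q ≠ r) (hqs : q ≠ s) :
    Commute (genClass (Gen.X p q hpq)) (genClass (Gen.H r s hrs)) :=
  genClass_mul_genClass (WRel.rel_xh_comm p q r s hpq hpr hps hqr hqs hrs)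

theorem semiconjBy_genClass_X_H {p q r : Fin n} (hpq : p ≠ q) (hpr : p ≠ r) (hqr : q ≠ r) :
    SemiconjBy (genClass (Gen.X q r hqr)) (genClass (Gen.H p r hpr))
      (genClass (Gen.H p q hpq)) := by
  have h := genClass_mul_genClass (WRel.rel_hx5 p r q hpr hpq hqr.symm)
  rw [genClass_X_swap] at h
  exact h.symm

end WordClass

theorem prop_h6_general (n : ℕ) (a b c d e f : Fin n)
    (hab : a ≠ b) (hac : a ≠ c) (had : a ≠ d) (hae : a ≠ e) (haf : a ≠ f)
    (hbc : b ≠ c) (hbd : b ≠ d) (hbe : b ≠ e) (hbf : b ≠ f)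
    (hcd : c ≠ d) (hce : c ≠ e) (hcf : c ≠ f)
    (hde : d ≠ e) (hdf : d ≠ f) (hef : e ≠ f) :
    WRel n
      [Gen.H c e hce, Gen.H d f hdf, Gen.H e f hef, Gen.H d f hdf, Gen.H c e hce, Gen.H a c hac, Gen.H b d hbd, Gen.H a b hab, Gen.H b d hbd, Gen.H a c hac, Gen.H a e hae, Gen.H b f hbf, Gen.H a b hab, Gen.H b f hbf, Gen.H a e hae]
      [Gen.H a c hac, Gen.H b d hbd, Gen.H a b hab, Gen.H b d hbd, Gen.H a c hac] := by
  have hd4 := wordClass_eq_iff.2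
    (WRel.rel_d4 a b c d e f hab hac had hae haf hbc hbd hbe hbf hcd hce hcf hde hdf hef)
  rw [← wordClass_eq_iff]
  simp only [List.cons_append, List.nil_append, wordClass_cons, wordClass_nil, mul_one] at hd4 ⊢
  set Hab := genClass (Gen.H a b hab)
  set Hac := genClass (Gen.H a c hac)
  set Hbd := genClass (Gen.H b d hbd)
  set Hae := genClass (Gen.H a e hae)
  set Hbf := genClass (Gen.H b f hbf)
  set Hce := genClass (Gen.H c e hce)
  set Hdf := genClass (Gen.H d f hdf)
  set Hef := genClass (Gen.H e f hef)
  set Xce := genClass (Gen.X c e hce)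
  set Xdf := genClass (Gen.X d f hdf)
  have hA := mul_mul_mul_self_of_mul_self
    (mul_mul_self_of_commute (commute_genClass_H_H hac hbd hab had hbc.symm hcd)
      (genClass_H_mul_self hac) (genClass_H_mul_self hbd)) (genClass_H_mul_self hab)
  have hB := mul_mul_mul_self_of_mul_self
    (mul_mul_self_of_commute (commute_genClass_H_H hae hbf hab haf hbe.symm hef)
      (genClass_H_mul_self hae) (genClass_H_mul_self hbf)) (genClass_H_mul_self hab)
  have hX := mul_mul_self_of_commute (commute_genClass_X_X hce hdf hcd hcf hde.symm hef)
    (genClass_X_mul_self hce) (genClass_X_mul_self hdf)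
  have hPX : SemiconjBy (Xce * Xdf) (Hae * Hbf) (Hac * Hbd) :=
    ((semiconjBy_genClass_X_H hac hae hce).mul_left
        (commute_genClass_X_H hdf hae had.symm hde haf.symm hef.symm)).mul_right
      (SemiconjBy.mul_left (commute_genClass_X_H hce hbd hbc.symm hcd hbe.symm hde.symm)
        (semiconjBy_genClass_X_H hbd hbf hdf))
  have hHX : Commute (Xce * Xdf) Hab :=
    (commute_genClass_X_H hce hab hac.symm hbc.symm hae.symm hbe.symm).mul_left
      (commute_genClass_X_H hdf hab had.symm hbd.symm haf.symm hbf.symm)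
  have hABA := mul_mul_eq_of_pow_three_eq (c := Hce * Hdf * Hef * Hce * Hdf) hX
    ((hPX.mul_right hHX).mul_right hPX)
    (by simpa only [pow_succ, pow_zero, one_mul, mul_assoc] using hd4)
  suffices h : Hce * Hdf * Hef * Hdf * Hce * (Hac * Hbd * Hab * Hbd * Hac) *
      (Hae * Hbf * Hab * Hbf * Hae) = Hac * Hbd * Hab * Hbd * Hac by
    simpa only [mul_assoc] using h
  rw [mul_mul_mul_swap_of_commute (commute_genClass_H_H hdf hce hcd.symm hde hcf.symm hef.symm),
    mul_mul_mul_swap_of_commute (commute_genClass_H_H hbd hac hab.symm hbc had.symm hcd.symm),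
    mul_mul_mul_swap_of_commute (commute_genClass_H_H hbf hae hab.symm hbe haf.symm hef.symm)]
  simpa only [mul_assoc] using mul_mul_eq_of_mul_mul_eq hABA hA hB

theorem prop_h6 (n : ℕ) (hn : 1 ≤ n) (a b c d e f : Fin n)
    (hab : a ≠ b) (hac : a ≠ c) (had : a ≠ d) (hae : a ≠ e) (haf : a ≠ f)
    (hbc : b ≠ c) (hbd : b ≠ d) (hbe : b ≠ e) (hbf : b ≠ f)
    (hcd : c ≠ d) (hce : c ≠ e) (hcf : c ≠ f)
    (hde : d ≠ e) (hdf : d ≠ f) (hef : e ≠ f) :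
    WRel n
      [Gen.H c e hce, Gen.H d f hdf, Gen.H e f hef, Gen.H d f hdf, Gen.H c e hce, Gen.H a c hac, Gen.H b d hbd, Gen.H a b hab, Gen.H b d hbd, Gen.H a c hac, Gen.H a e hae, Gen.H b f hbf, Gen.H a b hab, Gen.H b f hbf, Gen.H a e hae]
      [Gen.H a c hac, Gen.H b d hbd, Gen.H a b hab, Gen.H b d hbd, Gen.H a c hac] :=
  prop_h6_general n a b c d e f hab hac had hae haf hbc hbd hbe hbf hcd hce hcf hde hdf hef
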